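/- arXiv:2604.19358 — 5 statements merged into one kernel-verified Lean document; each statement's English description precedes it below -/
import Mathlib

section
/- (Kernel expansion on the far region.) There exists an absolute constant C > 0 such that for every (φ,θ) ∈ [0,1]²∖{(0,0)} and every y ∈ Q(3φ/2, 3θ/2), writing x = x(φ,θ), x₀ = (1,0,0) and ỹ = (y₁,−y₂,y₃): (i) |y−x₀| ≤ C|x−y|; (ii) |y−x₀| ≤ C|x−ỹ|; (iii) | 1/(|x−y|²|x−ỹ|²) − 1/|y−x₀|⁴ | ≤ C·|x−x₀| / |y−x₀|⁵. -/
open MeasureTheory Real Filter Set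
open scoped ENNReal NNReal

noncomputable section

abbrev E3 : Type := EuclideanSpace ℝ (Fin 3)

/-- The vector `(a, b, c)` in `ℝ³`. -/
def vec3 (a b c : ℝ) : E3 := (WithLp.equiv 2 (Fin 3 → ℝ)).symm ![a, b, c]

/-- Euclidean dot product in `ℝ³`. -/
def dot3 (x y : E3) : ℝ := x 0 * y 0 + x 1 * y 1 + x 2 * y 2

/-- Cross product in `ℝ³`. -/
def cross3 (x y : E3) : E3 :=
  vec3 (x 1 * y 2 - x 2 * y 1) (x 2 * y 0 - x 0 * y 2) (x 0 * y 1 - x 1 * y 0)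

/-- The unit sphere `S²` in `ℝ³`. -/
def S2 : Set E3 := Metric.sphere (0 : E3) 1

/-- The surface measure on `S²`: the 2-dimensional Hausdorff measure restricted to `S²`. -/
def sigma2 : Measure E3 := (μH[2] : Measure E3).restrict S2

/-- Spherical coordinates. -/
def sc (φ θ : ℝ) : E3 := vec3 (cos θ * cos φ) (cos θ * sin φ) (sin θ)

/-- The Biot–Savart velocity of a vorticity `ω` on the sphere. -/
def biotSavart (ω : E3 → ℝ) (x : E3) : E3 :=
  (2 * Real.pi)⁻¹ • ∫ y, (‖x - y‖ ^ 2)⁻¹ • ω y • cross3 x y ∂sigma2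

/-- The unit tangent vector `e_φ`. -/
def ephi (y : E3) : E3 := vec3 (-(y 1) / sqrt (1 - (y 2) ^ 2)) (y 0 / sqrt (1 - (y 2) ^ 2)) 0

/-- The unit tangent vector `e_θ`. -/
def etheta (y : E3) : E3 :=
  vec3 (-(y 2) * y 0 / sqrt (1 - (y 2) ^ 2)) (-(y 2) * y 1 / sqrt (1 - (y 2) ^ 2))
    (sqrt (1 - (y 2) ^ 2))

/-- Reflection in the second coordinate: `ỹ`. -/
def flip2 (y : E3) : E3 := vec3 (y 0) (-(y 1)) (y 2)

/-- Reflection in the third coordinate: `ȳ`. -/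
def flip3 (y : E3) : E3 := vec3 (y 0) (y 1) (-(y 2))

/-- `ω` is odd-odd symmetric on the sphere. -/
def OddOdd (ω : E3 → ℝ) : Prop := ∀ x ∈ S2, ω (flip2 x) = -ω x ∧ ω (flip3 x) = -ω x

def x₀ : E3 := vec3 1 0 0

/-- The region `Q(k₁, k₂)` on the sphere. -/
def Qset (k₁ k₂ : ℝ) : Set E3 :=
  (fun p : ℝ × ℝ => sc p.1 p.2) '' (Ioo k₁ Real.pi ×ˢ Ioo k₂ (Real.pi / 2))

/-- The open quarter sphere. -/
def S2q : Set E3 := {y ∈ S2 | 0 < y 1 ∧ 0 < y 2}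

/-- The (possibly infinite) Lipschitz constant of `f` on the set `s`. -/
def lipOn (f : ℝ × ℝ → ℝ) (s : Set (ℝ × ℝ)) : ℝ≥0∞ :=
  ⨆ p ∈ s, ⨆ q ∈ s, edist (f p) (f q) / edist p q

section AuxKernelFar

open Real

private lemma sin_three_half_aux (t : ℝ) (h0 : 0 ≤ t) (h1 : t ≤ 1) :
    9/8 * Real.sin t ≤ Real.sin (3*t/2) := by
  have hpi : (3:ℝ) < π := Real.pi_gt_three
  have hadd : Real.sin (3*t/2) = Real.sin t * Real.cos (t/2) + Real.cos t * Real.sin (t/2) := by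
    rw [show 3*t/2 = t + t/2 by ring, Real.sin_add]
  have hs0 : 0 ≤ Real.sin t := Real.sin_nonneg_of_nonneg_of_le_pi h0 (by linarith)
  have hs2 : Real.sin t / 2 ≤ Real.sin (t/2) := by
    have h2 : Real.sin t = 2 * Real.sin (t/2) * Real.cos (t/2) := by
      rw [show t = 2*(t/2) by ring, Real.sin_two_mul]; ring_nf
    have hc : Real.cos (t/2) ≤ 1 := Real.cos_le_one _
    have hsn : 0 ≤ Real.sin (t/2) := Real.sin_nonneg_of_nonneg_of_le_pi (by linarith) (by linarith)
    nlinarith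
  have hct : 1 - t^2/2 ≤ Real.cos t := by
    have := Real.sin_sq_eq_half_sub (t/2)
    have hle : Real.sin (t/2) ≤ t/2 := Real.sin_le (by linarith)
    have hsn : 0 ≤ Real.sin (t/2) := Real.sin_nonneg_of_nonneg_of_le_pi (by linarith) (by linarith)
    rw [show 2*(t/2) = t by ring] at this
    nlinarith
  have hct2 : 1 - t^2/8 ≤ Real.cos (t/2) := by
    have := Real.sin_sq_eq_half_sub (t/4)
    have hle : Real.sin (t/4) ≤ t/4 := Real.sin_le (by linarith)
    have hsn : 0 ≤ Real.sin (t/4) := Real.sin_nonneg_of_nonneg_of_le_pi (by linarith) (by linarith)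
    rw [show 2*(t/4) = t/2 by ring] at this
    nlinarith
  have hsn2 : 0 ≤ Real.sin (t/2) := Real.sin_nonneg_of_nonneg_of_le_pi (by linarith) (by linarith)
  have ht2 : t^2 ≤ 1 := by nlinarith
  nlinarith [mul_le_mul_of_nonneg_left hct2 hs0, mul_le_mul hct hs2 (by linarith) (by linarith)]

private lemma one_sub_cos_mul_aux (a b : ℝ) :
    1 - Real.cos a * Real.cos b = Real.sin ((a+b)/2)^2 + Real.sin ((a-b)/2)^2 := by
  rw [Real.sin_sq_eq_half_sub, Real.sin_sq_eq_half_sub,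
    show 2*((a+b)/2) = a + b by ring, show 2*((a-b)/2) = a - b by ring,
    Real.cos_add, Real.cos_sub]
  ring

private lemma sin_sq_bound_aux (t : ℝ) (h : |t| ≤ 1) :
    Real.sin t ^ 2 ≤ 64/81 * Real.sin (3*t/2) ^ 2 := by
  have hpi : (3:ℝ) < π := Real.pi_gt_three
  have key : ∀ s : ℝ, 0 ≤ s → s ≤ 1 → Real.sin s ^2 ≤ 64/81 * Real.sin (3*s/2)^2 := by
    intro s h0 h1
    have h2 := sin_three_half_aux s h0 h1
    have h3 : 0 ≤ Real.sin s := Real.sin_nonneg_of_nonneg_of_le_pi h0 (by linarith)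
    nlinarith
  obtain ⟨hl, hr⟩ := abs_le.mp h
  rcases le_total 0 t with ht | ht
  · exact key t ht hr
  · have := key (-t) (by linarith) (by linarith)
    rw [show 3*(-t)/2 = -(3*t/2) by ring, Real.sin_neg, Real.sin_neg] at this
    simpa using this

set_option maxHeartbeats 1000000 in
private lemma aux3_far (A B D m : ℝ) (hD : 0 < D) (hm : 0 ≤ m) (hA : D/9 ≤ A) (hB : D/9 ≤ B)
    (hA2 : A ≤ 2*D) (hB2 : B ≤ 2*D) (hAm : |D - A| ≤ m) (hBm : |D - B| ≤ m) :
    |1/(A^2*B^2) - 1/D^4| ≤ 656100 * m / D^5 := by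
  have hA0 : 0 < A := lt_of_lt_of_le (by positivity) hA
  have hB0 : 0 < B := lt_of_lt_of_le (by positivity) hB
  obtain ⟨h1, h2⟩ := abs_le.mp hAm
  obtain ⟨h3, h4⟩ := abs_le.mp hBm
  have hA4 : A^2 ≤ 4*D^2 := by nlinarith
  have hP1 : (D-A)*(D+A) ≤ m*(3*D) := by nlinarith
  have hP2 : (D-B)*(D+B) ≤ m*(3*D) := by nlinarith
  have hQ1 : D^2*((D-A)*(D+A)) ≤ D^2*(m*(3*D)) :=
    mul_le_mul_of_nonneg_left hP1 (sq_nonneg D)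
  have hQ2 : A^2*((D-B)*(D+B)) ≤ A^2*(m*(3*D)) :=
    mul_le_mul_of_nonneg_left hP2 (sq_nonneg A)
  have hQ3 : A^2*(m*(3*D)) ≤ 4*D^2*(m*(3*D)) :=
    mul_le_mul_of_nonneg_right hA4 (by positivity)
  have hN : |D^4 - A^2*B^2| ≤ 100*D^3*m := by
    rw [abs_le]
    constructor
    · rcases le_total m D with hc | hc
      · have hAub : A ≤ D + m := by linarith
        have hBub : B ≤ D + m := by linarith
        have hABub : A*B ≤ (D+m)*(D+m) := mul_le_mul hAub hBub hB0.le (by linarith)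
        have hABsq : (A*B)^2 ≤ ((D+m)*(D+m))^2 :=
          pow_le_pow_left₀ (mul_nonneg hA0.le hB0.le) hABub 2
        have e1 : m^2 ≤ D*m := by nlinarith
        have g1 : D*m^2 ≤ D*(D*m) := mul_le_mul_of_nonneg_left e1 hD.le
        have g2 : m*m^2 ≤ m*(D*m) := mul_le_mul_of_nonneg_left e1 hm
        have e2 : m^3 ≤ D^2*m := by linarith [g1, g2]
        have g3 : D*m^3 ≤ D*(D^2*m) := mul_le_mul_of_nonneg_left e2 hD.le
        have g4 : m*m^3 ≤ m*(D^2*m) := mul_le_mul_of_nonneg_left e2 hm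
        have g5 : D*(D*m^2) ≤ D*(D*(D*m)) := mul_le_mul_of_nonneg_left g1 hD.le
        have f1 : D^2*m^2 ≤ D^3*m := by linarith [g5]
        have e3 : m^4 ≤ D^3*m := by linarith [g4, f1]
        have f2 : D*m^3 ≤ D^3*m := by linarith [g3]
        linarith [hABsq, f1, f2, e3]
      · have hB4 : B^2 ≤ 4*D^2 := by nlinarith
        have h16 : A^2*B^2 ≤ 16*D^4 := by
          nlinarith [mul_le_mul hA4 hB4 (sq_nonneg B) (by positivity : (0:ℝ) ≤ 4*D^2)]
        have hDD : 0 ≤ D^3*(m-D) := mul_nonneg (by positivity) (by linarith)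
        nlinarith [h16, hDD]
    · linarith [hQ1, hQ2, hQ3, mul_nonneg (mul_nonneg (pow_nonneg hD.le 2) hm) hD.le]
  have hDen : (0:ℝ) < A^2*B^2*D^4 :=
    mul_pos (mul_pos (pow_pos hA0 2) (pow_pos hB0 2)) (pow_pos hD 4)
  have hrw : 1/(A^2*B^2) - 1/D^4 = (D^4 - A^2*B^2)/(A^2*B^2*D^4) := by
    field_simp
  rw [hrw, abs_div, abs_of_pos hDen, div_le_div_iff₀ hDen (by positivity)]
  have hA2' : D^2/81 ≤ A^2 := by nlinarith
  have hB2' : D^2/81 ≤ B^2 := by nlinarith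
  have hAB : D^4/6561 ≤ A^2*B^2 := by
    nlinarith [mul_le_mul hA2' hB2' (by positivity : (0:ℝ) ≤ D^2/81) (sq_nonneg A)]
  calc |D^4 - A^2*B^2| * D^5 ≤ (100*D^3*m) * D^5 :=
        mul_le_mul_of_nonneg_right hN (by positivity)
    _ = 100*m*D^8 := by ring
    _ ≤ 656100 * m * (A^2*B^2*D^4) := by
        linarith [mul_le_mul_of_nonneg_left (mul_le_mul_of_nonneg_right hAB
          (by positivity : (0:ℝ) ≤ D^4)) (by positivity : (0:ℝ) ≤ 656100*m)]

private lemma norm_sq_e3_aux (v : E3) : ‖v‖^2 = (v 0)^2 + (v 1)^2 + (v 2)^2 := by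
  rw [EuclideanSpace.norm_eq, Real.sq_sqrt (by positivity)]
  simp [Fin.sum_univ_three, sq_abs]

private lemma norm_sc_sub_x0_aux (φ θ : ℝ) : ‖sc φ θ - x₀‖^2 = 2 - 2*(cos θ * cos φ) := by
  have h := norm_sq_e3_aux (sc φ θ - x₀)
  have h0 : sc φ θ 0 = cos θ * cos φ := by simp [sc, vec3]
  have h1 : sc φ θ 1 = cos θ * sin φ := by simp [sc, vec3]
  have h2 : sc φ θ 2 = sin θ := by simp [sc, vec3]
  simp only [PiLp.sub_apply, h0, h1, h2] at h
  have k0 : x₀ 0 = 1 := by simp [x₀, vec3]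
  have k1 : x₀ 1 = 0 := by simp [x₀, vec3]
  have k2 : x₀ 2 = 0 := by simp [x₀, vec3]
  rw [k0, k1, k2] at h
  rw [h]
  nlinarith [sin_sq_add_cos_sq θ, sin_sq_add_cos_sq φ]

private lemma norm_sub_flip2_comm_aux (a b : E3) : ‖a - flip2 b‖ = ‖b - flip2 a‖ := by
  have h1 := norm_sq_e3_aux (a - flip2 b)
  have h2 := norm_sq_e3_aux (b - flip2 a)
  have heq : ‖a - flip2 b‖^2 = ‖b - flip2 a‖^2 := by
    rw [h1, h2]; simp [PiLp.sub_apply, flip2, vec3]; ring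
  calc ‖a - flip2 b‖ = Real.sqrt (‖a - flip2 b‖^2) := (Real.sqrt_sq (norm_nonneg _)).symm
    _ = Real.sqrt (‖b - flip2 a‖^2) := by rw [heq]
    _ = ‖b - flip2 a‖ := Real.sqrt_sq (norm_nonneg _)

private lemma norm_flip2_sub_x0_aux (a : E3) : ‖flip2 a - x₀‖ = ‖a - x₀‖ := by
  have h1 := norm_sq_e3_aux (flip2 a - x₀)
  have h2 := norm_sq_e3_aux (a - x₀)
  have heq : ‖flip2 a - x₀‖^2 = ‖a - x₀‖^2 := by
    rw [h1, h2]; simp [PiLp.sub_apply, flip2, vec3, x₀]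
  calc ‖flip2 a - x₀‖ = Real.sqrt (‖flip2 a - x₀‖^2) := (Real.sqrt_sq (norm_nonneg _)).symm
    _ = Real.sqrt (‖a - x₀‖^2) := by rw [heq]
    _ = ‖a - x₀‖ := Real.sqrt_sq (norm_nonneg _)

private lemma key_cos_aux (φ θ φ' θ' : ℝ) (hφ0 : 0 ≤ φ) (hφ1 : φ ≤ 1) (hθ0 : 0 ≤ θ)
    (hθ1 : θ ≤ 1) (hφ'l : 3*φ/2 < φ') (hφ'r : φ' < π) (hθ'l : 3*θ/2 < θ') (hθ'r : θ' < π/2) :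
    1 - Real.cos θ * Real.cos φ ≤ 64/81 * (1 - Real.cos θ' * Real.cos φ') := by
  have hpi : (3:ℝ) < π := Real.pi_gt_three
  have hcθ'0 : 0 ≤ Real.cos θ' := Real.cos_nonneg_of_mem_Icc ⟨by linarith, by linarith⟩
  have hc3φ0 : 0 ≤ Real.cos (3*φ/2) := Real.cos_nonneg_of_mem_Icc ⟨by linarith, by linarith⟩
  have hcθ' : Real.cos θ' ≤ Real.cos (3*θ/2) :=
    Real.cos_le_cos_of_nonneg_of_le_pi (by linarith) (by linarith) hθ'l.le
  have hcφ' : Real.cos φ' ≤ Real.cos (3*φ/2) :=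
    Real.cos_le_cos_of_nonneg_of_le_pi (by linarith) hφ'r.le hφ'l.le
  have step1 : Real.cos θ' * Real.cos φ' ≤ Real.cos (3*θ/2) * Real.cos (3*φ/2) :=
    calc Real.cos θ' * Real.cos φ' ≤ Real.cos θ' * Real.cos (3*φ/2) :=
          mul_le_mul_of_nonneg_left hcφ' hcθ'0
      _ ≤ Real.cos (3*θ/2) * Real.cos (3*φ/2) := mul_le_mul_of_nonneg_right hcθ' hc3φ0
  have e1 := one_sub_cos_mul_aux θ φ
  have e2 := one_sub_cos_mul_aux (3*θ/2) (3*φ/2)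
  rw [show (3*θ/2 + 3*φ/2)/2 = 3*((θ+φ)/2)/2 by ring,
    show (3*θ/2 - 3*φ/2)/2 = 3*((θ-φ)/2)/2 by ring] at e2
  have b1 := sin_sq_bound_aux ((θ+φ)/2) (by rw [abs_le]; constructor <;> linarith)
  have b2 := sin_sq_bound_aux ((θ-φ)/2) (by rw [abs_le]; constructor <;> linarith)
  linarith [b1, b2, e1, e2, step1]

end AuxKernelFar

/-- Kernel expansion on the far region `Q(3φ/2, 3θ/2)`. -/
theorem kernel_expansion_far_region :
    ∃ C : ℝ, 0 < C ∧
      ∀ φ ∈ Icc (0:ℝ) 1, ∀ θ ∈ Icc (0:ℝ) 1, (φ, θ) ≠ (0, 0) →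
        ∀ y ∈ Qset (3 * φ / 2) (3 * θ / 2),
          ‖y - x₀‖ ≤ C * ‖sc φ θ - y‖ ∧
          ‖y - x₀‖ ≤ C * ‖sc φ θ - flip2 y‖ ∧
          |1 / (‖sc φ θ - y‖ ^ 2 * ‖sc φ θ - flip2 y‖ ^ 2) - 1 / ‖y - x₀‖ ^ 4| ≤
            C * ‖sc φ θ - x₀‖ / ‖y - x₀‖ ^ 5 := by
  refine ⟨656100, by norm_num, ?_⟩
  intro φ hφ θ hθ _ y hy
  obtain ⟨⟨φ', θ'⟩, hmem, hy2⟩ := hy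
  have hy3 : sc φ' θ' = y := hy2
  subst hy3
  have hpi : (3:ℝ) < π := Real.pi_gt_three
  have hkey := key_cos_aux φ θ φ' θ' hφ.1 hφ.2 hθ.1 hθ.2 hmem.1.1 hmem.1.2 hmem.2.1 hmem.2.2
  have hD2 : ‖sc φ' θ' - x₀‖^2 = 2 - 2*(Real.cos θ' * Real.cos φ') := norm_sc_sub_x0_aux φ' θ'
  have hm2 : ‖sc φ θ - x₀‖^2 = 2 - 2*(Real.cos θ * Real.cos φ) := norm_sc_sub_x0_aux φ θ
  have hθ'0 : 0 < θ' := by linarith [hθ.1, hmem.2.1]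
  have hθ'2 : θ' < π/2 := hmem.2.2
  have hsθ' : 0 < Real.sin θ' := Real.sin_pos_of_pos_of_lt_pi hθ'0 (by linarith)
  have hcθ'0 : 0 ≤ Real.cos θ' := Real.cos_nonneg_of_mem_Icc ⟨by linarith, by linarith⟩
  have hcθ'1 : Real.cos θ' < 1 := by
    nlinarith [Real.sin_sq_add_cos_sq θ', Real.sin_le_one θ']
  have hDsq : 0 < ‖sc φ' θ' - x₀‖^2 := by
    rw [hD2]
    have := mul_le_mul_of_nonneg_left (Real.cos_le_one φ') hcθ'0
    nlinarith
  have hD0 : 0 < ‖sc φ' θ' - x₀‖ := by nlinarith [norm_nonneg (sc φ' θ' - x₀)]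
  have hmle : ‖sc φ θ - x₀‖ ≤ 8/9 * ‖sc φ' θ' - x₀‖ := by
    have hsq : ‖sc φ θ - x₀‖^2 ≤ (8/9 * ‖sc φ' θ' - x₀‖)^2 := by
      rw [hm2]
      nlinarith [hkey, hD2]
    calc ‖sc φ θ - x₀‖ = Real.sqrt (‖sc φ θ - x₀‖^2) := (Real.sqrt_sq (norm_nonneg _)).symm
      _ ≤ Real.sqrt ((8/9 * ‖sc φ' θ' - x₀‖)^2) := Real.sqrt_le_sqrt hsq
      _ = 8/9 * ‖sc φ' θ' - x₀‖ := Real.sqrt_sq (by positivity)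
  have htriA : |‖sc φ' θ' - x₀‖ - ‖sc φ θ - sc φ' θ'‖| ≤ ‖sc φ θ - x₀‖ := by
    have h := abs_norm_sub_norm_le (sc φ' θ' - x₀) (sc φ' θ' - sc φ θ)
    rw [show sc φ' θ' - x₀ - (sc φ' θ' - sc φ θ) = sc φ θ - x₀ by abel] at h
    rwa [norm_sub_rev (sc φ' θ') (sc φ θ)] at h
  have htriB : |‖sc φ' θ' - x₀‖ - ‖sc φ θ - flip2 (sc φ' θ')‖| ≤ ‖sc φ θ - x₀‖ := by
    have h := abs_norm_sub_norm_le (sc φ' θ' - x₀) (sc φ' θ' - flip2 (sc φ θ))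
    rw [show sc φ' θ' - x₀ - (sc φ' θ' - flip2 (sc φ θ)) = flip2 (sc φ θ) - x₀ by abel,
      norm_flip2_sub_x0_aux] at h
    rwa [norm_sub_flip2_comm_aux (sc φ θ) (sc φ' θ')]
  obtain ⟨ha1, ha2⟩ := abs_le.mp htriA
  obtain ⟨hb1, hb2⟩ := abs_le.mp htriB
  have hA9 : ‖sc φ' θ' - x₀‖/9 ≤ ‖sc φ θ - sc φ' θ'‖ := by linarith
  have hB9 : ‖sc φ' θ' - x₀‖/9 ≤ ‖sc φ θ - flip2 (sc φ' θ')‖ := by linarith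
  have hA2 : ‖sc φ θ - sc φ' θ'‖ ≤ 2*‖sc φ' θ' - x₀‖ := by linarith
  have hB2 : ‖sc φ θ - flip2 (sc φ' θ')‖ ≤ 2*‖sc φ' θ' - x₀‖ := by linarith
  refine ⟨by linarith [norm_nonneg (sc φ θ - sc φ' θ')], by
    linarith [norm_nonneg (sc φ θ - flip2 (sc φ' θ'))], ?_⟩
  exact aux3_far _ _ _ _ hD0 (norm_nonneg _) hA9 hB9 hA2 hB2 htriA htriB
end
end

section
/- (Vanishing of velocity components on the symmetry axes.) Let ω : S² → ℝ be bounded measurable and odd-odd symmetric, and let u be its Biot–Savart velocity. Then: (i) for every θ ∈ (−π/2, π/2), at the point x = (cos θ, 0, sin θ) one has u(x)·e_φ(x) = 0; (ii) for every φ ∈ [−π,π), at the point x = (cos φ, sin φ, 0) one has u(x)·e_θ(x) = 0, i.e. the third component u₃(x) = 0. -/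
open MeasureTheory Real Filter Set
open scoped ENNReal NNReal

noncomputable section

/-!
The reflection `y ↦ ỹ` preserves `σ` and reverses orientation, so it reverses cross products;
since `ω` is odd under it, substituting `y ↦ ỹ` in the Biot–Savart integral gives
`u(x̃) = (u(x))~`. At a point of the meridian `x₂ = 0` this forces `u₂(x) = 0`, and there
`e_φ(x)` points along the second axis. In the same way `y ↦ ȳ` gives `u₃ = 0` on the equator,
where `e_θ = (0, 0, 1)`.
-/

@[simp] lemma vec3_app0 (a b c : ℝ) : vec3 a b c 0 = a := rfl
@[simp] lemma vec3_app1 (a b c : ℝ) : vec3 a b c 1 = b := rfl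
@[simp] lemma vec3_app2 (a b c : ℝ) : vec3 a b c 2 = c := rfl

def reflectCoord (i : Fin 3) : E3 ≃ₗᵢ[ℝ] E3 :=
  LinearIsometryEquiv.piLpCongrRight 2 fun j =>
    if j = i then LinearIsometryEquiv.neg ℝ else LinearIsometryEquiv.refl ℝ ℝ

lemma reflectCoord_apply (i j : Fin 3) (v : E3) :
    reflectCoord i v j = if j = i then -v j else v j := by
  unfold reflectCoord
  split_ifs <;> simp [*]

lemma reflectCoord_eq_self_iff {i : Fin 3} {v : E3} : reflectCoord i v = v ↔ v i = 0 := by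
  constructor
  · intro h
    have hi := congrArg (· i) h
    simp only [reflectCoord_apply, if_pos] at hi
    linarith
  · intro h
    ext j
    rw [reflectCoord_apply]
    split_ifs with hj
    · simp [hj, h]
    · rfl

lemma reflectCoord_one : ⇑(reflectCoord 1) = flip2 := by
  ext v j
  fin_cases j <;> simp [flip2, reflectCoord_apply, vec3]

lemma reflectCoord_two : ⇑(reflectCoord 2) = flip3 := by
  ext v j
  fin_cases j <;> simp [flip3, reflectCoord_apply, vec3]

lemma cross3_reflectCoord (i : Fin 3) (x y : E3) :
    cross3 (reflectCoord i x) (reflectCoord i y) = -reflectCoord i (cross3 x y) := by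
  ext j
  fin_cases i <;> fin_cases j <;> simp [cross3, reflectCoord_apply, vec3] <;> ring

lemma measurableSet_S2 : MeasurableSet S2 :=
  Metric.isClosed_sphere.measurableSet

lemma LinearIsometryEquiv.preimage_S2 (T : E3 ≃ₗᵢ[ℝ] E3) : T ⁻¹' S2 = S2 := by
  simp [S2]

lemma LinearIsometryEquiv.measurePreserving_sigma2 (T : E3 ≃ₗᵢ[ℝ] E3) :
    MeasurePreserving T sigma2 sigma2 := by
  have h := (T.toIsometryEquiv.measurePreserving_hausdorffMeasure 2).restrict_preimage
    measurableSet_S2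
  rwa [T.coe_toIsometryEquiv, T.preimage_S2] at h

/-- `hcross` holds for every orientation-reversing isometry `T`. -/
lemma biotSavart_map (T : E3 ≃ₗᵢ[ℝ] E3)
    (hcross : ∀ x y, cross3 (T x) (T y) = -T (cross3 x y))
    {ω : E3 → ℝ} (hω : ∀ y ∈ S2, ω (T y) = -ω y) (x : E3) :
    biotSavart ω (T x) = T (biotSavart ω x) := by
  have hcomm : ∀ f : E3 → E3, ∫ y, T (f y) ∂sigma2 = T (∫ y, f y ∂sigma2) :=
    T.toLinearIsometry.integral_comp_comm
  unfold biotSavart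
  rw [map_smul, ← hcomm,
    ← T.measurePreserving_sigma2.integral_comp T.toHomeomorph.measurableEmbedding]
  congr 1
  refine integral_congr_ae ?_
  filter_upwards [ae_restrict_mem measurableSet_S2] with y hy
  simp [← map_sub, hω y hy, hcross, smul_neg]

lemma biotSavart_apply_eq_zero_of_apply_eq_zero {i : Fin 3} {ω : E3 → ℝ}
    (hω : ∀ y ∈ S2, ω (reflectCoord i y) = -ω y) {x : E3} (hx : x i = 0) :
    biotSavart ω x i = 0 := by
  rw [← reflectCoord_eq_self_iff]
  conv_rhs => rw [← reflectCoord_eq_self_iff.mpr hx]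
  exact (biotSavart_map _ (cross3_reflectCoord i) hω x).symm

theorem velocity_vanishes_on_axes_general (ω : E3 → ℝ) (hsym : OddOdd ω) :
    (∀ θ ∈ Ioo (-(Real.pi/2)) (Real.pi/2),
      dot3 (biotSavart ω (vec3 (cos θ) 0 (sin θ))) (ephi (vec3 (cos θ) 0 (sin θ))) = 0) ∧
    (∀ φ ∈ Ico (-Real.pi) Real.pi,
      dot3 (biotSavart ω (vec3 (cos φ) (sin φ) 0)) (etheta (vec3 (cos φ) (sin φ) 0)) = 0 ∧
      biotSavart ω (vec3 (cos φ) (sin φ) 0) 2 = 0) := by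
  have hodd₁ : ∀ y ∈ S2, ω (reflectCoord 1 y) = -ω y := by
    simpa only [reflectCoord_one] using fun y hy => (hsym y hy).1
  have hodd₂ : ∀ y ∈ S2, ω (reflectCoord 2 y) = -ω y := by
    simpa only [reflectCoord_two] using fun y hy => (hsym y hy).2
  refine ⟨fun θ _ => ?_, fun φ _ => ?_⟩
  · have hu₁ := biotSavart_apply_eq_zero_of_apply_eq_zero hodd₁ (vec3_app1 (cos θ) 0 (sin θ))
    simp [dot3, ephi, hu₁]
  · have hu₂ := biotSavart_apply_eq_zero_of_apply_eq_zero hodd₂ (vec3_app2 (cos φ) (sin φ) 0)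
    exact ⟨by simp [dot3, etheta, hu₂], hu₂⟩

/-- Vanishing of velocity components on the symmetry axes. -/
theorem velocity_vanishes_on_axes (ω : E3 → ℝ) (M : ℝ) (hmeas : Measurable ω)
    (hbdd : ∀ y, |ω y| ≤ M) (hsym : OddOdd ω) :
    (∀ θ ∈ Ioo (-(Real.pi/2)) (Real.pi/2),
      dot3 (biotSavart ω (vec3 (cos θ) 0 (sin θ))) (ephi (vec3 (cos θ) 0 (sin θ))) = 0) ∧
    (∀ φ ∈ Ico (-Real.pi) Real.pi,
      dot3 (biotSavart ω (vec3 (cos φ) (sin φ) 0)) (etheta (vec3 (cos φ) (sin φ) 0)) = 0 ∧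
      biotSavart ω (vec3 (cos φ) (sin φ) 0) 2 = 0) :=
  velocity_vanishes_on_axes_general ω hsym
end
end

section
/- (Derivative bounds for the profile function g, equation (3.7).) Let g(s) := s · ln(eᵉ − 1 − ln s) for s ∈ (0, e⁻¹]. Then g(e⁻¹) = 1, g is differentiable on (0, e⁻¹] with g'(s) = ln(eᵉ − 1 − ln s) − 1/(eᵉ − 1 − ln s), and for every s ∈ (0, e⁻¹] one has 1 < g'(s) < g(s)/s. -/
open MeasureTheory Real Filter Set
open scoped ENNReal NNReal

noncomputable section

/-! With `u = eᵉ − 1 − ln s ≥ eᵉ`, the derivative `g'(s) = ln u − 1/u` lies strictly between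
`ln u − 1 ≥ e − 1 > 1` and `ln u = g(s)/s`. -/

lemma hasDerivAt_mul_log_const_sub_log {c s : ℝ} (hs : 0 < s) (hc : c - log s ≠ 0) :
    HasDerivAt (fun t => t * log (c - log t)) (log (c - log s) - 1 / (c - log s)) s := by
  have h : HasDerivAt (fun t => t * log (c - log t))
      (1 * log (c - log s) + s * (-s⁻¹ / (c - log s))) s :=
    (hasDerivAt_id' s).mul (((hasDerivAt_log hs.ne').const_sub c).log hc)
  refine h.congr_deriv ?_
  field_simp
  ring

lemma one_lt_log_sub_inv {u : ℝ} (hu : exp 2 ≤ u) : 1 < log u - 1 / u := by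
  have hupos : 0 < u := (exp_pos 2).trans_le hu
  have hlog : 2 ≤ log u := (le_log_iff_exp_le hupos).2 hu
  have hinv : 1 / u < 1 := by
    rw [div_lt_one hupos]
    exact (one_lt_exp_iff.2 two_pos).trans_le hu
  linarith

/-- Derivative bounds for the profile function `g`:
`g(e⁻¹) = 1`, `g` is differentiable on `(0, e⁻¹]` with
`g'(s) = ln(eᵉ − 1 − ln s) − 1/(eᵉ − 1 − ln s)`, and `1 < g'(s) < g(s)/s` there. -/
theorem profile_g_deriv_bounds :
    (fun s : ℝ => s * log (exp (exp 1) - 1 - log s)) (exp (-1)) = 1 ∧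
    ∀ s ∈ Ioc (0 : ℝ) (exp (-1)),
      HasDerivWithinAt (fun s : ℝ => s * log (exp (exp 1) - 1 - log s))
        (log (exp (exp 1) - 1 - log s) - 1 / (exp (exp 1) - 1 - log s))
        (Ioc (0 : ℝ) (exp (-1))) s ∧
      1 < log (exp (exp 1) - 1 - log s) - 1 / (exp (exp 1) - 1 - log s) ∧
      log (exp (exp 1) - 1 - log s) - 1 / (exp (exp 1) - 1 - log s) <
        (s * log (exp (exp 1) - 1 - log s)) / s := by
  refine ⟨?_, fun s ⟨hs0, hs1⟩ => ?_⟩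
  · simp only [log_exp, sub_neg_eq_add, sub_add_cancel, ← exp_add]
    norm_num
  have hu : exp (exp 1) ≤ exp (exp 1) - 1 - log s := by
    linarith [(log_le_iff_le_exp hs0).2 hs1]
  have hupos : 0 < exp (exp 1) - 1 - log s := (exp_pos _).trans_le hu
  refine ⟨(hasDerivAt_mul_log_const_sub_log hs0 hupos.ne').hasDerivWithinAt, ?_, ?_⟩
  · have h2e : (2 : ℝ) ≤ exp 1 := by linarith [add_one_le_exp (1 : ℝ)]
    exact one_lt_log_sub_inv ((exp_le_exp.2 h2e).trans hu)
  · rw [mul_div_cancel_left₀ _ hs0.ne']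
    exact sub_lt_self _ (one_div_pos.2 hupos)
end
end

section
/- (The limiting constant 2/π for the leading-order integral.) Let g(s) := s · ln(eᵉ − 1 − ln s) for s ∈ (0, e⁻¹], let Ω₀ := { (φ,θ) ∈ (0,1)² : φ ∈ (0, e⁻¹), θ < g(φ) }, and for s ∈ (0, e⁻⁴] let D_s := { (φ,θ) ∈ Ω₀ : s² + g(s)² < φ² + θ² < e⁻² }. Then lim_{s→0⁺} ( 4 / (π |ln s|) ) ∫_{D_s} ( φθ / (φ² + θ²)² ) dφ dθ = 2/π. -/
open MeasureTheory Real Filter Set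
open scoped ENNReal NNReal

noncomputable section

namespace LOIL

def g2 : ℝ × ℝ → ℝ := fun p => p.1 * p.2 / (p.1 ^ 2 + p.2 ^ 2) ^ 2

def Dset (s : ℝ) : Set (ℝ × ℝ) :=
  {p : ℝ × ℝ | p ∈ Ioo (0:ℝ) 1 ×ˢ Ioo (0:ℝ) 1 ∧
      p.1 ∈ Ioo (0:ℝ) (exp (-1)) ∧
      p.2 < p.1 * log (exp (exp 1) - 1 - log p.1) ∧
      s ^ 2 + (s * log (exp (exp 1) - 1 - log s)) ^ 2 < p.1 ^ 2 + p.2 ^ 2 ∧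
      p.1 ^ 2 + p.2 ^ 2 < exp (-2)}

def Ms (s : ℝ) : ℝ := log (exp (exp 1) - 1 - log s)

def rr (s : ℝ) : ℝ := Real.sqrt (s ^ 2 + (s * Ms s) ^ 2)

lemma rr_nonneg (s : ℝ) : 0 ≤ rr s := Real.sqrt_nonneg _

lemma rr_pos {s : ℝ} (hs : 0 < s) : 0 < rr s := Real.sqrt_pos.2 (by positivity)

lemma rr_sq (s : ℝ) : rr s ^ 2 = s ^ 2 + (s * Ms s) ^ 2 := Real.sq_sqrt (by positivity)

lemma exp_neg_one_sq : Real.exp (-1) ^ 2 = Real.exp (-2) := by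
  rw [sq, ← Real.exp_add]; norm_num

lemma Dset_measurable (s : ℝ) : MeasurableSet (Dset s) := by
  unfold Dset
  apply MeasurableSet.inter
  · exact (measurableSet_Ioo.prod measurableSet_Ioo)
  apply MeasurableSet.inter
  · exact measurable_fst measurableSet_Ioo
  apply MeasurableSet.inter
  · exact measurableSet_lt measurable_snd
      (measurable_fst.mul ((Real.measurable_log.comp
        ((measurable_const.sub (Real.measurable_log.comp measurable_fst))))))
  apply MeasurableSet.inter
  · exact measurableSet_lt measurable_const
      ((measurable_fst.pow_const 2).add (measurable_snd.pow_const 2))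
  · exact measurableSet_lt
      ((measurable_fst.pow_const 2).add (measurable_snd.pow_const 2)) measurable_const

lemma mem_polar_image {a b : ℝ} (ha : 0 ≤ a) (hb : 0 ≤ b) {p : ℝ × ℝ}
    (h1 : 0 < p.1) (h2 : 0 < p.2) (hr1 : a ^ 2 < p.1 ^ 2 + p.2 ^ 2)
    (hr2 : p.1 ^ 2 + p.2 ^ 2 < b ^ 2) :
    p ∈ polarCoord.symm '' (Ioo a b ×ˢ Ioo 0 (π / 2)) := by
  set r := Real.sqrt (p.1 ^ 2 + p.2 ^ 2) with hrdef
  have hrpos : 0 < r := Real.sqrt_pos.2 (by positivity)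
  have hr2' : r ^ 2 = p.1 ^ 2 + p.2 ^ 2 := Real.sq_sqrt (by positivity)
  have har : a < r := by nlinarith
  have hrb : r < b := by nlinarith
  refine ⟨(r, Real.arctan (p.2 / p.1)), ⟨⟨har, hrb⟩, ?_, Real.arctan_lt_pi_div_two _⟩, ?_⟩
  · rw [← Real.arctan_zero]
    exact Real.arctan_strictMono (by positivity)
  · have hs : Real.sqrt (1 + (p.2 / p.1) ^ 2) = r / p.1 := by
      have : 1 + (p.2 / p.1) ^ 2 = (p.1 ^ 2 + p.2 ^ 2) / p.1 ^ 2 := by field_simp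
      rw [this, Real.sqrt_div (by positivity), Real.sqrt_sq h1.le, ← hrdef]
    have hcos : Real.cos (Real.arctan (p.2 / p.1)) = p.1 / r := by
      rw [Real.cos_arctan, hs]; field_simp
    have hsin : Real.sin (Real.arctan (p.2 / p.1)) = p.2 / r := by
      rw [Real.sin_arctan, hs]
      field_simp
    show (r * Real.cos _, r * Real.sin _) = p
    rw [hcos, hsin]
    field_simp

lemma Dset_subset_upper (s : ℝ) :
    Dset s ⊆ polarCoord.symm '' (Ioo (rr s) (exp (-1)) ×ˢ Ioo 0 (π / 2)) := by
  rintro p ⟨⟨hp1, hp2⟩, _, _, hlow, hup⟩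
  exact mem_polar_image (rr_nonneg s) (Real.exp_pos _).le hp1.1 hp2.1
    (by rw [rr_sq]; exact hlow) (by rw [exp_neg_one_sq]; exact hup)

lemma lower_subset_Dset {s β δ : ℝ} (hs : 0 < s) (hβ0 : 0 < β) (hβ : β < π / 2)
    (hδ0 : 0 < δ) (hδe : δ ≤ exp (-1)) (hδβ : Real.tan β ≤ Ms δ) (hrs : rr s < δ) :
    polarCoord.symm '' (Ioo (rr s) δ ×ˢ Ioo 0 β) ⊆ Dset s := by
  rintro q ⟨⟨r, α⟩, ⟨hr, hα⟩, rfl⟩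
  simp only [mem_Ioo] at hr hα
  have hrpos : 0 < r := lt_of_le_of_lt (rr_nonneg s) hr.1
  have hαpi : α < π / 2 := lt_trans hα.2 hβ
  have hcos : 0 < Real.cos α := Real.cos_pos_of_mem_Ioo ⟨by linarith [pi_pos], hαpi⟩
  have hsin : 0 < Real.sin α := Real.sin_pos_of_pos_of_lt_pi hα.1 (by linarith [pi_pos])
  have hcos1 : Real.cos α ≤ 1 := Real.cos_le_one α
  have hsin1 : Real.sin α ≤ 1 := Real.sin_le_one α
  have he1 : Real.exp (-1) < 1 := Real.exp_lt_one_iff.2 (by norm_num)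
  show ((r * Real.cos α, r * Real.sin α) : ℝ × ℝ) ∈ Dset s
  have hx : (0:ℝ) < r * Real.cos α := by positivity
  have hy : (0:ℝ) < r * Real.sin α := by positivity
  have hrδ : r < δ := hr.2
  have hxδ : r * Real.cos α < δ := lt_of_le_of_lt (by nlinarith) hrδ
  have hsq : (r * Real.cos α) ^ 2 + (r * Real.sin α) ^ 2 = r ^ 2 := by
    have := Real.sin_sq_add_cos_sq α; nlinarith
  have hMδ : Ms δ < Ms (r * Real.cos α) := by
    unfold Ms
    apply Real.log_lt_log
    · have : Real.log δ ≤ -1 := by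
        calc Real.log δ ≤ Real.log (Real.exp (-1)) := Real.log_le_log hδ0 hδe
        _ = -1 := Real.log_exp _
      nlinarith [Real.add_one_le_exp (Real.exp 1), Real.exp_pos (1:ℝ),
        Real.exp_one_gt_d9]
    · have := Real.log_lt_log hx hxδ
      linarith
  have htan : Real.sin α / Real.cos α < Ms (r * Real.cos α) := by
    calc Real.sin α / Real.cos α = Real.tan α := (Real.tan_eq_sin_div_cos α).symm
    _ < Real.tan β := Real.tan_lt_tan_of_lt_of_lt_pi_div_two (by linarith [pi_pos]) hβ hα.2
    _ ≤ Ms δ := hδβ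
    _ < _ := hMδ
  refine ⟨⟨⟨hx, lt_trans (lt_of_lt_of_le hxδ hδe) he1⟩,
      ⟨hy, ?_⟩⟩, ⟨hx, lt_of_lt_of_le hxδ hδe⟩, ?_, ?_, ?_⟩
  · calc r * Real.sin α ≤ r * 1 := by nlinarith
      _ < 1 := by linarith [lt_of_lt_of_le hrδ hδe]
  · show r * Real.sin α < (r * Real.cos α) * Ms (r * Real.cos α)
    calc r * Real.sin α = (r * Real.cos α) * (Real.sin α / Real.cos α) := by
          field_simp
      _ < (r * Real.cos α) * Ms (r * Real.cos α) := by
          apply mul_lt_mul_of_pos_left htan hx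
  · show s ^ 2 + (s * Ms s) ^ 2 < _
    rw [hsq, ← rr_sq]
    exact pow_lt_pow_left₀ hr.1 (rr_nonneg s) (by norm_num)
  · rw [hsq, ← exp_neg_one_sq]
    exact pow_lt_pow_left₀ (lt_of_lt_of_le hrδ hδe) hrpos.le (by norm_num)

lemma sector_measurable {a b β : ℝ} (ha : 0 < a) (hβ0 : 0 < β) (hβ : β ≤ π / 2) :
    MeasurableSet (polarCoord.symm '' (Ioo a b ×ˢ Ioo 0 β)) := by
  have hTsub : (Ioo a b ×ˢ Ioo 0 β : Set (ℝ × ℝ)) ⊆ polarCoord.target := by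
    rintro ⟨r, θ⟩ ⟨hr, hθ⟩
    exact ⟨lt_trans ha hr.1, lt_trans (by linarith [pi_pos]) hθ.1,
      lt_of_lt_of_le hθ.2 (hβ.trans (by linarith [pi_pos]))⟩
  exact (polarCoord.symm.isOpen_image_of_subset_source (isOpen_Ioo.prod isOpen_Ioo)
      (by rw [polarCoord.symm_source]; exact hTsub)).measurableSet

lemma image_basic {a b β : ℝ} (ha : 0 ≤ a) (hβ : β ≤ π / 2) :
    ∀ p ∈ polarCoord.symm '' (Ioo a b ×ˢ Ioo 0 β),
      0 < p.1 ∧ 0 < p.2 ∧ a ^ 2 < p.1 ^ 2 + p.2 ^ 2 ∧ p.1 ^ 2 + p.2 ^ 2 < b ^ 2 := by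
  rintro q ⟨⟨r, α⟩, ⟨hr, hα⟩, rfl⟩
  simp only [mem_Ioo] at hr hα
  have hrpos : 0 < r := lt_of_le_of_lt ha hr.1
  have hαpi : α < π / 2 := lt_of_lt_of_le hα.2 hβ
  have hcos : 0 < Real.cos α := Real.cos_pos_of_mem_Ioo ⟨by linarith [pi_pos], hαpi⟩
  have hsin : 0 < Real.sin α := Real.sin_pos_of_pos_of_lt_pi hα.1 (by linarith [pi_pos])
  have hsq : (r * Real.cos α) ^ 2 + (r * Real.sin α) ^ 2 = r ^ 2 := by
    have := Real.sin_sq_add_cos_sq α; nlinarith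
  refine ⟨mul_pos hrpos hcos, mul_pos hrpos hsin, ?_, ?_⟩
  · show a ^ 2 < (r * Real.cos α) ^ 2 + (r * Real.sin α) ^ 2
    rw [hsq]; nlinarith
  · show (r * Real.cos α) ^ 2 + (r * Real.sin α) ^ 2 < b ^ 2
    rw [hsq]; nlinarith

lemma g2_nonneg {p : ℝ × ℝ} (h1 : 0 < p.1) (h2 : 0 < p.2) : 0 ≤ g2 p := by
  unfold g2; positivity

lemma g2_measurable : Measurable g2 :=
  (measurable_fst.mul measurable_snd).div
    (((measurable_fst.pow_const 2).add (measurable_snd.pow_const 2)).pow_const 2)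

lemma integrableOn_sector {a b β : ℝ} (ha : 0 < a) (hb0 : 0 < b) (hb : b ≤ 1) (hβ0 : 0 < β)
    (hβ : β ≤ π / 2) :
    IntegrableOn g2 (polarCoord.symm '' (Ioo a b ×ˢ Ioo 0 β)) := by
  refine Measure.integrableOn_of_bounded (M := 1 / (2 * a ^ 2)) ?_ ?_ ?_
  · have hsub : polarCoord.symm '' (Ioo a b ×ˢ Ioo 0 β) ⊆ Icc (-1:ℝ) 1 ×ˢ Icc (-1:ℝ) 1 := by
      intro p hp
      obtain ⟨h1, h2, h3, h4⟩ := image_basic ha.le hβ p hp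
      have hb2 : p.1 ^ 2 + p.2 ^ 2 < 1 := by nlinarith
      constructor
      · constructor <;> nlinarith
      · constructor <;> nlinarith
    refine ne_of_lt (lt_of_le_of_lt (measure_mono hsub) ?_)
    exact (isCompact_Icc.prod isCompact_Icc).measure_lt_top
  · exact g2_measurable.aestronglyMeasurable
  · apply ae_restrict_of_forall_mem (sector_measurable ha hβ0 hβ)
    intro p hp
    obtain ⟨h1, h2, h3, h4⟩ := image_basic ha.le hβ p hp
    rw [Real.norm_eq_abs, abs_of_nonneg (g2_nonneg h1 h2)]
    show p.1 * p.2 / (p.1 ^ 2 + p.2 ^ 2) ^ 2 ≤ 1 / (2 * a ^ 2)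
    rw [div_le_div_iff₀ (by positivity) (by positivity)]
    nlinarith [sq_nonneg (p.1 - p.2), sq_nonneg (p.1 ^ 2 + p.2 ^ 2)]

lemma sector_integral {a b β : ℝ} (ha : 0 < a) (hab : a < b) (hβ0 : 0 < β)
    (hβ : β ≤ π / 2) :
    ∫ p in polarCoord.symm '' (Ioo a b ×ˢ Ioo 0 β), g2 p
      = (Real.sin β ^ 2 / 2) * (Real.log b - Real.log a) := by
  set T : Set (ℝ × ℝ) := Ioo a b ×ˢ Ioo 0 β with hT
  have hTopen : IsOpen T := isOpen_Ioo.prod isOpen_Ioo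
  have hTmeas : MeasurableSet T := hTopen.measurableSet
  have hTsub : T ⊆ polarCoord.target := by
    rintro ⟨r, θ⟩ ⟨hr, hθ⟩
    exact ⟨lt_trans ha hr.1,
      lt_trans (by linarith [pi_pos]) hθ.1,
      lt_of_lt_of_le hθ.2 (hβ.trans (by linarith [pi_pos]))⟩
  have hSmeas : MeasurableSet (polarCoord.symm '' T) := sector_measurable ha hβ0 hβ
  have hmemiff : ∀ p ∈ polarCoord.target,
      (polarCoord.symm p ∈ polarCoord.symm '' T ↔ p ∈ T) := by
    intro p hp
    constructor
    · rintro ⟨q, hq, hqe⟩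
      have := polarCoord.symm.injOn (by simpa using hTsub hq) (by simpa using hp) hqe
      rwa [← this]
    · intro h; exact mem_image_of_mem _ h
  have key := integral_comp_polarCoord_symm (Set.indicator (polarCoord.symm '' T) g2)
  rw [integral_indicator hSmeas] at key
  rw [← key]
  have step1 : ∫ p in polarCoord.target, p.1 • Set.indicator (polarCoord.symm '' T) g2 (polarCoord.symm p)
      = ∫ p in T, p.1 * g2 (polarCoord.symm p) := by
    rw [← integral_indicator hTmeas]
    have : ∀ p, Set.indicator T (fun p : ℝ × ℝ => p.1 * g2 (polarCoord.symm p)) p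
        = Set.indicator polarCoord.target
          (fun p : ℝ × ℝ => p.1 • Set.indicator (polarCoord.symm '' T) g2 (polarCoord.symm p)) p := by
      intro p
      by_cases hp : p ∈ T
      · rw [Set.indicator_of_mem hp, Set.indicator_of_mem (hTsub hp),
          Set.indicator_of_mem ((hmemiff p (hTsub hp)).2 hp)]
        rfl
      · rw [Set.indicator_of_notMem hp]
        by_cases hp2 : p ∈ polarCoord.target
        · rw [Set.indicator_of_mem hp2,
            Set.indicator_of_notMem (fun h => hp ((hmemiff p hp2).1 h))]
          simp
        · rw [Set.indicator_of_notMem hp2]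
    rw [← integral_indicator polarCoord.open_target.measurableSet]
    exact (integral_congr_ae (Filter.Eventually.of_forall fun p => (this p).symm))
  rw [step1]
  have hcong : ∀ p ∈ T, p.1 * g2 (polarCoord.symm p) = (p.1)⁻¹ * (Real.sin p.2 * Real.cos p.2) := by
    rintro ⟨r, θ⟩ ⟨hr, hθ⟩
    have hr0 : (0:ℝ) < r := lt_trans ha hr.1
    simp only [g2, polarCoord_symm_apply]
    have h1 : (r * Real.cos θ) ^ 2 + (r * Real.sin θ) ^ 2 = r ^ 2 := by
      have := Real.sin_sq_add_cos_sq θ; nlinarith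
    rw [h1]
    field_simp
  rw [setIntegral_congr_fun hTmeas hcong]
  rw [hT, Measure.volume_eq_prod,
    setIntegral_prod_mul (fun r : ℝ => r⁻¹) (fun θ : ℝ => Real.sin θ * Real.cos θ)]
  have h1 : ∫ r in Ioo a b, r⁻¹ = Real.log b - Real.log a := by
    rw [Measure.restrict_congr_set Ioo_ae_eq_Ioc, ← intervalIntegral.integral_of_le hab.le,
      integral_inv (by rw [uIcc_of_le hab.le]; intro h; exact absurd h.1 (not_le.2 ha)),
      Real.log_div (by linarith) (by linarith)]
  have h2 : ∫ θ in Ioo 0 β, Real.sin θ * Real.cos θ = Real.sin β ^ 2 / 2 := by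
    rw [Measure.restrict_congr_set Ioo_ae_eq_Ioc, ← intervalIntegral.integral_of_le hβ0.le,
      integral_sin_mul_cos₁]
    simp
  rw [h1, h2]; ring

lemma exp_neg_one_lt_one : Real.exp (-1) < 1 := Real.exp_lt_one_iff.2 (by norm_num)

lemma integral_upper {s : ℝ} (hs : 0 < s) (hrse : rr s < exp (-1)) :
    ∫ p in Dset s, g2 p ≤ (1 / 2) * (-1 - Real.log (rr s)) := by
  have hπ : (0:ℝ) < π / 2 := by positivity
  have h := setIntegral_mono_set
    (integrableOn_sector (rr_pos hs) (Real.exp_pos _) exp_neg_one_lt_one.le hπ le_rfl)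
    (ae_restrict_of_forall_mem (sector_measurable (rr_pos hs) hπ le_rfl)
      (fun p hp => by
        obtain ⟨h1, h2, _, _⟩ := image_basic (rr_nonneg s) le_rfl p hp
        exact g2_nonneg h1 h2))
    (HasSubset.Subset.eventuallyLE (Dset_subset_upper s))
  calc ∫ p in Dset s, g2 p ≤ _ := h
    _ = (Real.sin (π/2) ^ 2 / 2) * (Real.log (exp (-1)) - Real.log (rr s)) :=
        sector_integral (rr_pos hs) hrse hπ le_rfl
    _ = (1 / 2) * (-1 - Real.log (rr s)) := by
        rw [Real.sin_pi_div_two, Real.log_exp]; ring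

lemma integral_lower {s β δ : ℝ} (hs : 0 < s) (hβ0 : 0 < β) (hβ : β < π / 2)
    (hδ0 : 0 < δ) (hδe : δ ≤ exp (-1)) (hδβ : Real.tan β ≤ Ms δ) (hrs : rr s < δ) :
    (Real.sin β ^ 2 / 2) * (Real.log δ - Real.log (rr s)) ≤ ∫ p in Dset s, g2 p := by
  have hπ : (0:ℝ) < π / 2 := by positivity
  have hIntD : IntegrableOn g2 (Dset s) :=
    (integrableOn_sector (rr_pos hs) (Real.exp_pos _) exp_neg_one_lt_one.le hπ le_rfl).mono_set
      (Dset_subset_upper s)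
  have h := setIntegral_mono_set hIntD
    (ae_restrict_of_forall_mem (Dset_measurable s)
      (fun p hp => g2_nonneg hp.1.1.1 hp.1.2.1))
    (HasSubset.Subset.eventuallyLE (lower_subset_Dset hs hβ0 hβ hδ0 hδe hδβ hrs))
  calc (Real.sin β ^ 2 / 2) * (Real.log δ - Real.log (rr s))
      = ∫ p in polarCoord.symm '' (Ioo (rr s) δ ×ˢ Ioo 0 β), g2 p :=
        (sector_integral (rr_pos hs) hrs hβ0 hβ.le).symm
    _ ≤ _ := h


lemma neg_log_tendsto : Tendsto (fun s : ℝ => -Real.log s) (nhdsWithin 0 (Ioi 0)) atTop :=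
  tendsto_neg_atBot_atTop.comp Real.tendsto_log_nhdsGT_zero

lemma E_big : (3:ℝ) < Real.exp (Real.exp 1) - 1 := by
  have h1 : (2:ℝ) < Real.exp 1 := by
    have := Real.exp_one_gt_d9; linarith
  have h2 : Real.exp 1 + 1 ≤ Real.exp (Real.exp 1) := Real.add_one_le_exp _
  have h3 : Real.exp 2 ≤ Real.exp (Real.exp 1) := Real.exp_le_exp.2 h1.le
  have h4 : Real.exp 2 = Real.exp 1 * Real.exp 1 := by
    rw [← Real.exp_add]; norm_num
  nlinarith

lemma log_rr {s : ℝ} (hs : 0 < s) :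
    Real.log (rr s) = Real.log s + (1/2) * Real.log (1 + Ms s ^ 2) := by
  have h1 : (0:ℝ) < 1 + Ms s ^ 2 := by positivity
  have : rr s = s * Real.sqrt (1 + Ms s ^ 2) := by
    rw [rr, show s ^ 2 + (s * Ms s) ^ 2 = s ^ 2 * (1 + Ms s ^ 2) by ring,
      Real.sqrt_mul (by positivity), Real.sqrt_sq hs.le]
  rw [this, Real.log_mul hs.ne' (Real.sqrt_pos.2 h1).ne', Real.log_sqrt h1.le]
  ring

lemma lim_H : Tendsto (fun t : ℝ => 4 * Real.sqrt (Real.exp (Real.exp 1) - 1 + t) / t)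
    atTop (nhds 0) := by
  apply squeeze_zero' (g := fun t : ℝ => 4 * Real.sqrt 2 / Real.sqrt t)
  · filter_upwards [eventually_ge_atTop (1:ℝ)] with t ht
    positivity
  · filter_upwards [eventually_ge_atTop (max 1 (Real.exp (Real.exp 1) - 1))] with t ht
    have ht1 : (1:ℝ) ≤ t := le_trans (le_max_left _ _) ht
    have htE : Real.exp (Real.exp 1) - 1 ≤ t := le_trans (le_max_right _ _) ht
    have h2t : Real.exp (Real.exp 1) - 1 + t ≤ 2 * t := by linarith
    have hsq : Real.sqrt (Real.exp (Real.exp 1) - 1 + t) ≤ Real.sqrt 2 * Real.sqrt t := by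
      rw [← Real.sqrt_mul (by norm_num)]
      exact Real.sqrt_le_sqrt h2t
    have htpos : (0:ℝ) < t := by linarith
    have hst : Real.sqrt t * Real.sqrt t = t := Real.mul_self_sqrt htpos.le
    have hstpos : 0 < Real.sqrt t := Real.sqrt_pos.2 htpos
    rw [div_le_div_iff₀ htpos hstpos]
    calc 4 * Real.sqrt (Real.exp (Real.exp 1) - 1 + t) * Real.sqrt t
        ≤ 4 * (Real.sqrt 2 * Real.sqrt t) * Real.sqrt t := by nlinarith
      _ = 4 * Real.sqrt 2 * (Real.sqrt t * Real.sqrt t) := by ring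
      _ = 4 * Real.sqrt 2 * t := by rw [hst]
  · have hsqrt : Tendsto Real.sqrt atTop atTop := by
      refine tendsto_atTop_atTop.2 fun b => ⟨(max b 0) ^ 2, fun t ht => ?_⟩
      calc b ≤ max b 0 := le_max_left _ _
        _ = Real.sqrt ((max b 0) ^ 2) := (Real.sqrt_sq (le_max_right _ _)).symm
        _ ≤ Real.sqrt t := Real.sqrt_le_sqrt ht
    exact Tendsto.div_atTop tendsto_const_nhds hsqrt

lemma lim0 : Tendsto (fun s : ℝ => Real.log (1 + Ms s ^ 2) / (-Real.log s))
    (nhdsWithin 0 (Ioi 0)) (nhds 0) := by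
  apply squeeze_zero'
    (g := fun s : ℝ => 4 * Real.sqrt (Real.exp (Real.exp 1) - 1 + (-Real.log s)) / (-Real.log s))
  · filter_upwards [Ioo_mem_nhdsGT_of_mem (Set.mem_Ico.2 ⟨le_rfl, one_pos⟩)] with s hs
    have hlog : Real.log s < 0 := Real.log_neg hs.1 hs.2
    have h1 : (1:ℝ) ≤ 1 + Ms s ^ 2 := by nlinarith [sq_nonneg (Ms s)]
    exact div_nonneg (Real.log_nonneg h1) (by linarith)
  · filter_upwards [Ioo_mem_nhdsGT_of_mem (Set.mem_Ico.2 ⟨le_rfl, one_pos⟩)] with s hs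
    have hlog : Real.log s < 0 := Real.log_neg hs.1 hs.2
    set X := Real.exp (Real.exp 1) - 1 - Real.log s with hX
    have hX1 : (1:ℝ) < X := by have := E_big; simp only [hX]; linarith
    have hXpos : (0:ℝ) < X := by linarith
    have hMs : Ms s = Real.log X := by rw [Ms, hX]
    have hMs0 : 0 ≤ Ms s := by rw [hMs]; exact Real.log_nonneg hX1.le
    have hMsle : Ms s ≤ X - 1 := by rw [hMs]; exact Real.log_le_sub_one_of_pos hXpos
    have hsq : 1 + Ms s ^ 2 ≤ X ^ 2 := by nlinarith
    have hlog1 : Real.log (1 + Ms s ^ 2) ≤ 2 * Real.log X := by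
      calc Real.log (1 + Ms s ^ 2) ≤ Real.log (X ^ 2) :=
            Real.log_le_log (by positivity) hsq
        _ = 2 * Real.log X := by rw [Real.log_pow]; push_cast; ring
    have hsqrtpos : 0 < Real.sqrt X := Real.sqrt_pos.2 hXpos
    have hlog2 : Real.log X ≤ 2 * Real.sqrt X := by
      have : Real.log X = 2 * Real.log (Real.sqrt X) := by
        rw [Real.log_sqrt hXpos.le]; ring
      rw [this]
      have := Real.log_le_sub_one_of_pos hsqrtpos
      linarith
    have hEq : Real.exp (Real.exp 1) - 1 + (-Real.log s) = X := by rw [hX]; ring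
    rw [hEq]
    have hbound : Real.log (1 + Ms s ^ 2) ≤ 4 * Real.sqrt X := by linarith
    exact div_le_div_of_nonneg_right hbound (by linarith)
  · exact lim_H.comp neg_log_tendsto


lemma lim_inv : Tendsto (fun s : ℝ => (-Real.log s)⁻¹) (nhdsWithin 0 (Ioi 0)) (nhds 0) :=
  neg_log_tendsto.inv_tendsto_atTop

lemma lim_ratio (c : ℝ) :
    Tendsto (fun s : ℝ => (c - Real.log (rr s)) / (-Real.log s))
      (nhdsWithin 0 (Ioi 0)) (nhds 1) := by
  have heq : ∀ᶠ s in nhdsWithin 0 (Ioi 0),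
      1 + c * (-Real.log s)⁻¹ - (1/2) * (Real.log (1 + Ms s ^ 2) / (-Real.log s))
        = (c - Real.log (rr s)) / (-Real.log s) := by
    filter_upwards [Ioo_mem_nhdsGT_of_mem (Set.mem_Ico.2 ⟨le_rfl, one_pos⟩)] with s hs
    have hlog : Real.log s < 0 := Real.log_neg hs.1 hs.2
    have hne2 : Real.log s ≠ 0 := ne_of_lt (Real.log_neg hs.1 hs.2)
    have hne : -Real.log s ≠ 0 := by simpa using hne2
    rw [log_rr hs.1, eq_div_iff hne]
    field_simp [hne2]
    ring
  have hlim : Tendsto (fun s : ℝ =>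
      1 + c * (-Real.log s)⁻¹ - (1/2) * (Real.log (1 + Ms s ^ 2) / (-Real.log s)))
      (nhdsWithin 0 (Ioi 0)) (nhds 1) := by
    have := ((tendsto_const_nhds (x := (1:ℝ))).add (lim_inv.const_mul c)).sub
      (lim0.const_mul (1/2))
    simpa using this
  exact Tendsto.congr' heq hlim

theorem main :
    Tendsto (fun s : ℝ => (4 / (Real.pi * |log s|)) * ∫ p in Dset s, g2 p)
      (nhdsWithin 0 (Ioi 0)) (nhds (2 / Real.pi)) := by
  rw [Metric.tendsto_nhds]
  intro ε hε
  -- choose β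
  set η := min (π/4) (Real.sqrt ε) with hη
  have hηpos : 0 < η := lt_min (by positivity) (Real.sqrt_pos.2 hε)
  have hηle : η ≤ π/4 := min_le_left _ _
  set β := π/2 - η with hβdef
  have hβ0 : 0 < β := by have := pi_pos; simp only [hβdef]; linarith
  have hβlt : β < π/2 := by simp only [hβdef]; linarith
  have hcosβ : Real.cos β = Real.sin η := by rw [hβdef, Real.cos_pi_div_two_sub]
  have hcos_le : Real.cos β ≤ η := by rw [hcosβ]; exact Real.sin_le hηpos.le
  have hcos_nonneg : 0 ≤ Real.cos β := by
    rw [hcosβ]; exact Real.sin_nonneg_of_nonneg_of_le_pi hηpos.le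
      (by have := pi_pos; linarith)
  have hcossq : Real.cos β ^ 2 ≤ ε := by
    have h1 : Real.cos β ^ 2 ≤ η ^ 2 := by nlinarith
    have h2 : η ^ 2 ≤ Real.sqrt ε ^ 2 := by
      have := min_le_right (π/4) (Real.sqrt ε); nlinarith
    have h3 : Real.sqrt ε ^ 2 = ε := Real.sq_sqrt hε.le
    linarith
  have hsinsq : 1 - ε ≤ Real.sin β ^ 2 := by
    have := Real.sin_sq_add_cos_sq β; linarith
  -- choose δ
  set δ := min (exp (-1)) (exp (exp (exp 1) - 1 - exp (Real.tan β))) with hδdef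
  have hδ0 : 0 < δ := lt_min (Real.exp_pos _) (Real.exp_pos _)
  have hδe : δ ≤ exp (-1) := min_le_left _ _
  have hδβ : Real.tan β ≤ Ms δ := by
    have hlogδ : Real.log δ ≤ exp (exp 1) - 1 - exp (Real.tan β) := by
      calc Real.log δ ≤ Real.log (exp (exp (exp 1) - 1 - exp (Real.tan β))) :=
            Real.log_le_log hδ0 (min_le_right _ _)
        _ = _ := Real.log_exp _
    have hpos : exp (Real.tan β) ≤ exp (exp 1) - 1 - Real.log δ := by linarith
    calc Real.tan β = Real.log (exp (Real.tan β)) := (Real.log_exp _).symm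
      _ ≤ Ms δ := Real.log_le_log (Real.exp_pos _) hpos
  -- limits of the bounds
  have hπpos : (0:ℝ) < π := pi_pos
  have hLβ : 2/π - ε < 2 * Real.sin β ^ 2 / π := by
    have h1 : (2/π) * Real.cos β ^ 2 ≤ (2/π) * ε := by
      apply mul_le_mul_of_nonneg_left hcossq (by positivity)
    have h2 : (2/π) * ε < ε := by
      rw [div_mul_eq_mul_div]
      rw [div_lt_iff₀ hπpos]
      nlinarith [pi_gt_three]
    have h3 := Real.sin_sq_add_cos_sq β
    have : 2 * Real.sin β ^ 2 / π = 2/π - (2/π) * Real.cos β ^ 2 := by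
      field_simp; nlinarith
    rw [this]; linarith
  have hlower := lim_ratio (Real.log δ)
  have hupper := lim_ratio (-1)
  have hev1 : ∀ᶠ s in nhdsWithin 0 (Ioi 0),
      2/π - ε < (2 * Real.sin β ^ 2 / π) * ((Real.log δ - Real.log (rr s)) / (-Real.log s)) := by
    have : Tendsto (fun s : ℝ =>
        (2 * Real.sin β ^ 2 / π) * ((Real.log δ - Real.log (rr s)) / (-Real.log s)))
        (nhdsWithin 0 (Ioi 0)) (nhds (2 * Real.sin β ^ 2 / π)) := by
      simpa using hlower.const_mul (2 * Real.sin β ^ 2 / π)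
    exact this.eventually (eventually_gt_nhds hLβ)
  have hev2 : ∀ᶠ s in nhdsWithin 0 (Ioi 0),
      (2/π) * ((-1 - Real.log (rr s)) / (-Real.log s)) < 2/π + ε := by
    have : Tendsto (fun s : ℝ => (2/π) * ((-1 - Real.log (rr s)) / (-Real.log s)))
        (nhdsWithin 0 (Ioi 0)) (nhds (2/π)) := by
      simpa using hupper.const_mul (2/π)
    exact this.eventually (eventually_lt_nhds (by linarith))
  have hev3 : ∀ᶠ s in nhdsWithin 0 (Ioi 0),
      (0:ℝ) < (Real.log δ - Real.log (rr s)) / (-Real.log s) :=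
    hlower.eventually (eventually_gt_nhds one_pos)
  have hev4 : ∀ᶠ s in nhdsWithin 0 (Ioi 0),
      (0:ℝ) < (-1 - Real.log (rr s)) / (-Real.log s) :=
    hupper.eventually (eventually_gt_nhds one_pos)
  filter_upwards [hev1, hev2, hev3, hev4,
    Ioo_mem_nhdsGT_of_mem (Set.mem_Ico.2 ⟨le_rfl, one_pos⟩)] with s h1 h2 h3 h4 hs
  have hs0 : 0 < s := hs.1
  have hlogneg : Real.log s < 0 := Real.log_neg hs.1 hs.2
  have ht : (0:ℝ) < -Real.log s := by linarith
  -- from h3 : rr s < δ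
  have hrrδ : rr s < δ := by
    have hnum : 0 < Real.log δ - Real.log (rr s) := by
      by_contra hcon
      push_neg at hcon
      have : (Real.log δ - Real.log (rr s)) / (-Real.log s) ≤ 0 :=
        div_nonpos_of_nonpos_of_nonneg (by linarith) ht.le
      linarith
    have := Real.exp_lt_exp.2 (show Real.log (rr s) < Real.log δ by linarith)
    rwa [Real.exp_log (rr_pos hs0), Real.exp_log hδ0] at this
  have hrre : rr s < exp (-1) := by
    have hnum : 0 < -1 - Real.log (rr s) := by
      by_contra hcon
      push_neg at hcon
      have : (-1 - Real.log (rr s)) / (-Real.log s) ≤ 0 :=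
        div_nonpos_of_nonpos_of_nonneg (by linarith) ht.le
      linarith
    have := Real.exp_lt_exp.2 (show Real.log (rr s) < -1 by linarith)
    rwa [Real.exp_log (rr_pos hs0)] at this
  have habs : |Real.log s| = -Real.log s := abs_of_neg hlogneg
  have hNpos : 0 < 4 / (π * |Real.log s|) := by rw [habs]; positivity
  have hIlow := integral_lower hs0 hβ0 hβlt hδ0 hδe hδβ hrrδ
  have hIup := integral_upper hs0 hrre
  have hflow : (2 * Real.sin β ^ 2 / π) * ((Real.log δ - Real.log (rr s)) / (-Real.log s))
      ≤ (4 / (π * |Real.log s|)) * ∫ p in Dset s, g2 p := by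
    calc (2 * Real.sin β ^ 2 / π) * ((Real.log δ - Real.log (rr s)) / (-Real.log s))
        = (4 / (π * |Real.log s|)) * ((Real.sin β ^ 2 / 2) * (Real.log δ - Real.log (rr s))) := by
          rw [habs]; field_simp; ring
      _ ≤ _ := mul_le_mul_of_nonneg_left hIlow hNpos.le
  have hfup : (4 / (π * |Real.log s|)) * ∫ p in Dset s, g2 p
      ≤ (2/π) * ((-1 - Real.log (rr s)) / (-Real.log s)) := by
    calc (4 / (π * |Real.log s|)) * ∫ p in Dset s, g2 p
        ≤ (4 / (π * |Real.log s|)) * ((1/2) * (-1 - Real.log (rr s))) :=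
          mul_le_mul_of_nonneg_left hIup hNpos.le
      _ = (2/π) * ((-1 - Real.log (rr s)) / (-Real.log s)) := by
          rw [habs]; field_simp; ring
  rw [Real.dist_eq, abs_lt]
  constructor <;> [linarith; linarith]

end LOIL

/-- The limiting constant `2/π` for the leading-order integral over `D_s`. -/
theorem leading_order_integral_limit :
    Tendsto (fun s : ℝ =>
        (4 / (Real.pi * |log s|)) *
          ∫ p in {p : ℝ × ℝ | p ∈ Ioo (0:ℝ) 1 ×ˢ Ioo (0:ℝ) 1 ∧
              p.1 ∈ Ioo (0:ℝ) (exp (-1)) ∧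
              p.2 < p.1 * log (exp (exp 1) - 1 - log p.1) ∧
              s ^ 2 + (s * log (exp (exp 1) - 1 - log s)) ^ 2 < p.1 ^ 2 + p.2 ^ 2 ∧
              p.1 ^ 2 + p.2 ^ 2 < exp (-2)},
            p.1 * p.2 / (p.1 ^ 2 + p.2 ^ 2) ^ 2)
      (nhdsWithin 0 (Ioi 0)) (nhds (2 / Real.pi)) := by
  exact LOIL.main
end
end

section
/- (ODE asymptotics yielding the double-exponential rate 2/π.) Let h̄ : (0,1) → (0,∞) be continuous with lim_{s→0⁺} h̄(s) = 2/π. Let k : [0,∞) → ℝ be differentiable with exp(−exp(k(t))) ∈ (0,1) for all t ≥ 0 and satisfying k'(t) = h̄( exp(−exp(k(t))) ) for all t ≥ 0. Then lim_{t→∞} k(t)/t = 2/π. In particular, if ε(t) := exp(−exp(k(t))), then lim_{t→∞} ln(−ln ε(t)) / t = 2/π, i.e. ε(t) decays double-exponentially at rate 2/π. -/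
open MeasureTheory Real Filter Set
open scoped ENNReal NNReal

noncomputable section

/-!
A solution of the autonomous equation `k' = φ(k)` with `φ` continuous and positive is increasing; were
it bounded it would converge to some `K`, and then `k'` would tend to `φ(K) > 0`, forcing `k t / t → φ(K)`
against `k t / t → 0`. So `k → ∞`, hence `exp (-exp k) → 0⁺` and `k' → 2/π`. A function whose derivative
tends to `L` grows like `L t` (mean value theorem applied to `k t - L t`), which gives `k t / t → 2/π`;
the second limit is the same function since `log (-log (exp (-exp x))) = x`.
-/

open Asymptotics Topology

theorem isLittleO_id_atTop_of_hasDerivAt_tendsto_zero {g g' : ℝ → ℝ}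
    (hg : ∀ᶠ t in atTop, HasDerivAt g (g' t) t) (hg' : Tendsto g' atTop (𝓝 0)) :
    g =o[atTop] id := by
  refine isLittleO_iff.2 fun c hc => ?_
  have hsmall : ∀ᶠ t in atTop, ‖g' t‖ ≤ c / 2 :=
    hg'.norm.eventually (ge_mem_nhds (by simpa using half_pos hc))
  obtain ⟨T, hT⟩ := eventually_atTop.1 ((hg.and hsmall).and (eventually_ge_atTop 0))
  have hT₀ : 0 ≤ T := (hT T le_rfl).2
  have hincr : ∀ t ≥ T, ‖g t - g T‖ ≤ c / 2 * ‖t - T‖ := fun t ht =>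
    (convex_Ici T).norm_image_sub_le_of_norm_hasDerivWithin_le
      (fun x hx => (hT x hx).1.1.hasDerivWithinAt) (fun x hx => (hT x hx).1.2) self_mem_Ici ht
  filter_upwards [eventually_ge_atTop T, eventually_ge_atTop (2 * ‖g T‖ / c)] with t htT htg
  have hgT : ‖g T‖ ≤ c / 2 * t := by
    rw [div_le_iff₀ hc] at htg
    linarith
  have ht := hincr t htT
  rw [Real.norm_of_nonneg (sub_nonneg.2 htT)] at ht
  rw [id, Real.norm_of_nonneg (hT₀.trans htT)]
  calc ‖g t‖ ≤ ‖g t - g T‖ + ‖g T‖ := norm_le_norm_sub_add _ _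
    _ ≤ c * t := by nlinarith

theorem tendsto_div_atTop_of_hasDerivAt_tendsto {f f' : ℝ → ℝ} {L : ℝ}
    (hf : ∀ᶠ t in atTop, HasDerivAt f (f' t) t) (hf' : Tendsto f' atTop (𝓝 L)) :
    Tendsto (fun t => f t / t) atTop (𝓝 L) := by
  have hg : ∀ᶠ t in atTop, HasDerivAt (fun t => f t - L * t) (f' t - L) t :=
    hf.mono fun t ht => by simpa only [mul_one] using ht.fun_sub ((hasDerivAt_id' t).const_mul L)
  have hg' : Tendsto (fun t => f' t - L) atTop (𝓝 0) := by simpa using hf'.sub_const L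
  have hrem := (isLittleO_id_atTop_of_hasDerivAt_tendsto_zero hg hg').tendsto_div_nhds_zero
  refine (by simpa using hrem.add_const L : Tendsto _ atTop (𝓝 L)).congr' ?_
  filter_upwards [eventually_ne_atTop 0] with t ht
  field_simp
  ring

theorem tendsto_atTop_of_hasDerivAt_comp_of_pos {φ k : ℝ → ℝ} {a : ℝ} (hφ : Continuous φ)
    (hφ_pos : ∀ x, 0 < φ x) (hk : ∀ t ≥ a, HasDerivAt k (φ (k t)) t) :
    Tendsto k atTop atTop := by
  have hmono : MonotoneOn k (Ici a) :=
    monotoneOn_of_hasDerivWithinAt_nonneg (convex_Ici a)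
      (fun t ht => (hk t ht).continuousAt.continuousWithinAt)
      (fun t ht => (hk t (interior_subset ht)).hasDerivWithinAt) fun t _ => (hφ_pos _).le
  set u : ℝ → ℝ := fun t => k (max a t)
  have hu : Monotone u := fun s t hst =>
    hmono (le_max_left a s) (le_max_left a t) (max_le_max le_rfl hst)
  have hku : u =ᶠ[atTop] k :=
    (eventually_ge_atTop a).mono fun t ht => by simp only [u, max_eq_right ht]
  refine (tendsto_atTop_atTop_of_monotone' hu fun hbdd => ?_).congr' hku
  have hkK : Tendsto k atTop (𝓝 (⨆ t, u t)) := (tendsto_atTop_ciSup hu hbdd).congr' hku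
  have hslope := tendsto_div_atTop_of_hasDerivAt_tendsto ((eventually_ge_atTop a).mono hk)
    ((hφ.tendsto _).comp hkK)
  exact (hφ_pos _).ne' (tendsto_nhds_unique hslope (hkK.div_atTop tendsto_id))

theorem exp_neg_exp_mem_Ioo (x : ℝ) : exp (-exp x) ∈ Ioo (0 : ℝ) 1 :=
  ⟨exp_pos _, exp_lt_one_iff.2 (neg_lt_zero.2 (exp_pos x))⟩

theorem tendsto_exp_neg_exp_atTop_nhdsGT :
    Tendsto (fun x => exp (-exp x)) atTop (𝓝[>] 0) :=
  tendsto_exp_atBot_nhdsGT.comp (tendsto_neg_atTop_atBot.comp tendsto_exp_atTop)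

theorem ode_double_exponential_rate_general (hbar : ℝ → ℝ) (k : ℝ → ℝ)
    (hbar_cont : ContinuousOn hbar (Ioo 0 1))
    (hbar_pos : ∀ s ∈ Ioo (0:ℝ) 1, 0 < hbar s)
    (hbar_lim : Tendsto hbar (nhdsWithin 0 (Ioi 0)) (nhds (2 / Real.pi)))
    (hk_deriv : ∀ t ≥ (0:ℝ), HasDerivAt k (hbar (exp (-exp (k t)))) t) :
    Tendsto (fun t => k t / t) atTop (nhds (2 / Real.pi)) ∧
    Tendsto (fun t => log (-log (exp (-exp (k t)))) / t) atTop (nhds (2 / Real.pi)) := by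
  have hφ : Continuous fun x => hbar (exp (-exp x)) :=
    hbar_cont.comp_continuous (by fun_prop) exp_neg_exp_mem_Ioo
  have hk_top : Tendsto k atTop atTop :=
    tendsto_atTop_of_hasDerivAt_comp_of_pos hφ (fun x => hbar_pos _ (exp_neg_exp_mem_Ioo x))
      hk_deriv
  have hrate : Tendsto (fun t => k t / t) atTop (𝓝 (2 / π)) :=
    tendsto_div_atTop_of_hasDerivAt_tendsto ((eventually_ge_atTop 0).mono hk_deriv)
      (hbar_lim.comp (tendsto_exp_neg_exp_atTop_nhdsGT.comp hk_top))
  exact ⟨hrate, by simpa only [log_exp, neg_neg] using hrate⟩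

/-- ODE asymptotics yielding the double-exponential rate `2/π`. -/
theorem ode_double_exponential_rate (hbar : ℝ → ℝ) (k : ℝ → ℝ)
    (hbar_cont : ContinuousOn hbar (Ioo 0 1))
    (hbar_pos : ∀ s ∈ Ioo (0:ℝ) 1, 0 < hbar s)
    (hbar_lim : Tendsto hbar (nhdsWithin 0 (Ioi 0)) (nhds (2 / Real.pi)))
    (hk_range : ∀ t ≥ (0:ℝ), exp (-exp (k t)) ∈ Ioo (0:ℝ) 1)
    (hk_deriv : ∀ t ≥ (0:ℝ), HasDerivAt k (hbar (exp (-exp (k t)))) t) :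
    Tendsto (fun t => k t / t) atTop (nhds (2 / Real.pi)) ∧
    Tendsto (fun t => log (-log (exp (-exp (k t)))) / t) atTop (nhds (2 / Real.pi)) :=
  ode_double_exponential_rate_general hbar k hbar_cont hbar_pos hbar_lim hk_deriv
end
end
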